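/- Let D > 0, K > 0, p ≥ 1, 0 ≤ q < 2p, δ_b > 0, δ_v > 0, L_b > 0, L_v > 0, ε₀ > 0 be reals, set r = 1/(2p−q) and C = (K/D)^{1/(2p−q)}, and fix 0 < ρ < 1. Define x₋ = (1−ρ)·C, x₊ = (1+ρ)·C, and 𝔪 = min{K·x₋^q − D·x₋^{2p}, D·x₊^{2p} − K·x₊^q}. Let Δ : (0,∞) × (0,∞) → ℝ satisfy |Δ(ε,B) − D·ε^{2p} + K·ε^q/B| ≤ L_b·ε^{2p+δ_b} + L_v·ε^{q+δ_v}/B for all 0 < ε ≤ ε₀ and all B > 0, and suppose ε ↦ Δ(ε,B) is continuous on (0, ε₀] for each B > 0. Then 𝔪 > 0, and for every B ≥ B₀(ρ) := max{(4·L_b·x₊^{2p+δ_b}/𝔪)^{1/(r·δ_b)}, (4·L_v·x₊^{q+δ_v}/𝔪)^{1/(r·δ_v)}, (x₊/ε₀)^{1/r}} one has Δ(x₋·B^{−r}, B) < 0 and Δ(x₊·B^{−r}, B) > 0; consequently there exists ε* ∈ [x₋·B^{−r}, x₊·B^{−r}] with Δ(ε*, B) = 0. -/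
import Mathlib

set_option maxHeartbeats 1000000


/-- The root of the leading balance. -/
noncomputable def bracketRoot (D K p q : ℝ) : ℝ := (K / D) ^ (1 / (2 * p - q))

/-- Lower bracket endpoint `x₋ = (1−ρ)C`. -/
noncomputable def xMinus (D K p q ρ : ℝ) : ℝ := (1 - ρ) * bracketRoot D K p q

/-- Upper bracket endpoint `x₊ = (1+ρ)C`. -/
noncomputable def xPlus (D K p q ρ : ℝ) : ℝ := (1 + ρ) * bracketRoot D K p q

/-- Sign margin `𝔪 = min{K x₋^q − D x₋^{2p}, D x₊^{2p} − K x₊^q}`. -/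
noncomputable def signMargin (D K p q ρ : ℝ) : ℝ :=
  min (K * (xMinus D K p q ρ) ^ q - D * (xMinus D K p q ρ) ^ (2 * p))
      (D * (xPlus D K p q ρ) ^ (2 * p) - K * (xPlus D K p q ρ) ^ q)

/-- Explicit budget threshold `B₀(ρ)`. -/
noncomputable def budgetThreshold (D K p q ρ δb δv Lb Lv ε₀ : ℝ) : ℝ :=
  max (max ((4 * Lb * (xPlus D K p q ρ) ^ (2 * p + δb) / signMargin D K p q ρ)
              ^ (1 / ((1 / (2 * p - q)) * δb)))
           ((4 * Lv * (xPlus D K p q ρ) ^ (q + δv) / signMargin D K p q ρ)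
              ^ (1 / ((1 / (2 * p - q)) * δv))))
      ((xPlus D K p q ρ / ε₀) ^ (1 / (1 / (2 * p - q))))

/-- Finite-budget bracketing of the local help-harm boundary: for every
budget `B ≥ B₀(ρ)` the MSE difference is negative at `x₋ B^{−r}` and positive
at `x₊ B^{−r}`, hence has a zero in between. -/
theorem finite_budget_bracketing
    (D K p q δb δv Lb Lv ε₀ ρ : ℝ)
    (hD : 0 < D) (hK : 0 < K) (hp : 1 ≤ p) (hq0 : 0 ≤ q) (hq : q < 2 * p)
    (hδb : 0 < δb) (hδv : 0 < δv) (hLb : 0 < Lb) (hLv : 0 < Lv) (hε₀ : 0 < ε₀)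
    (hρ0 : 0 < ρ) (hρ1 : ρ < 1)
    (Δ : ℝ → ℝ → ℝ)
    (hbound : ∀ ε B : ℝ, 0 < ε → ε ≤ ε₀ → 0 < B →
      |Δ ε B - D * ε ^ (2 * p) + K * ε ^ q / B|
        ≤ Lb * ε ^ (2 * p + δb) + Lv * ε ^ (q + δv) / B)
    (hcont : ∀ B : ℝ, 0 < B → ContinuousOn (fun ε => Δ ε B) (Set.Ioc 0 ε₀)) :
    0 < signMargin D K p q ρ ∧
    ∀ B : ℝ, budgetThreshold D K p q ρ δb δv Lb Lv ε₀ ≤ B →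
      Δ (xMinus D K p q ρ * B ^ (-(1 / (2 * p - q)))) B < 0 ∧
      0 < Δ (xPlus D K p q ρ * B ^ (-(1 / (2 * p - q)))) B ∧
      ∃ ε ∈ Set.Icc (xMinus D K p q ρ * B ^ (-(1 / (2 * p - q))))
                    (xPlus D K p q ρ * B ^ (-(1 / (2 * p - q)))),
        Δ ε B = 0 := by

  have h2pq : (0:ℝ) < 2 * p - q := by linarith
  set r : ℝ := 1 / (2 * p - q) with hrdef
  have hrpos : 0 < r := by rw [hrdef]; positivity
  have hone : r * (2 * p - q) = 1 := by rw [hrdef]; field_simp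
  have hKD : (0:ℝ) < K / D := div_pos hK hD
  have hCpos : 0 < bracketRoot D K p q := Real.rpow_pos_of_pos hKD _
  have hCpow : bracketRoot D K p q ^ (2 * p - q) = K / D := by
    rw [bracketRoot, one_div, Real.rpow_inv_rpow hKD.le (ne_of_gt h2pq)]
  have hxm0 : 0 < xMinus D K p q ρ := mul_pos (by linarith) hCpos
  have hxp0 : 0 < xPlus D K p q ρ := mul_pos (by linarith) hCpos
  have hxmC : xMinus D K p q ρ < bracketRoot D K p q := by
    rw [xMinus]; nlinarith
  have hCxp : bracketRoot D K p q < xPlus D K p q ρ := by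
    rw [xPlus]; nlinarith
  have hxmxp : xMinus D K p q ρ ≤ xPlus D K p q ρ := by
    rw [xMinus, xPlus]; nlinarith
  -- margin positivity
  have hm1 : 0 < K * (xMinus D K p q ρ) ^ q - D * (xMinus D K p q ρ) ^ (2 * p) := by
    have hsplit : (xMinus D K p q ρ) ^ (2 * p)
        = (xMinus D K p q ρ) ^ q * (xMinus D K p q ρ) ^ (2 * p - q) := by
      rw [← Real.rpow_add hxm0]; ring_nf
    have hlt : (xMinus D K p q ρ) ^ (2 * p - q) < K / D := by
      rw [← hCpow]; exact Real.rpow_lt_rpow hxm0.le hxmC h2pq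
    have hqpos : 0 < (xMinus D K p q ρ) ^ q := Real.rpow_pos_of_pos hxm0 q
    have hDs : D * (xMinus D K p q ρ) ^ (2 * p - q) < K := by
      have h := (lt_div_iff₀ hD).mp hlt
      rw [mul_comm]; exact h
    have h2 : D * (xMinus D K p q ρ) ^ (2 * p)
        = (D * (xMinus D K p q ρ) ^ (2 * p - q)) * (xMinus D K p q ρ) ^ q := by
      rw [hsplit]; ring
    have h3 : (D * (xMinus D K p q ρ) ^ (2 * p - q)) * (xMinus D K p q ρ) ^ q
        < K * (xMinus D K p q ρ) ^ q := mul_lt_mul_of_pos_right hDs hqpos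
    rw [h2] at *
    linarith
  have hm2 : 0 < D * (xPlus D K p q ρ) ^ (2 * p) - K * (xPlus D K p q ρ) ^ q := by
    have hsplit : (xPlus D K p q ρ) ^ (2 * p)
        = (xPlus D K p q ρ) ^ q * (xPlus D K p q ρ) ^ (2 * p - q) := by
      rw [← Real.rpow_add hxp0]; ring_nf
    have hlt : K / D < (xPlus D K p q ρ) ^ (2 * p - q) := by
      rw [← hCpow]; exact Real.rpow_lt_rpow hCpos.le hCxp h2pq
    have hqpos : 0 < (xPlus D K p q ρ) ^ q := Real.rpow_pos_of_pos hxp0 q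
    have hDs : K < D * (xPlus D K p q ρ) ^ (2 * p - q) := by
      have h := (div_lt_iff₀ hD).mp hlt
      rw [mul_comm]; exact h
    have h2 : D * (xPlus D K p q ρ) ^ (2 * p)
        = (D * (xPlus D K p q ρ) ^ (2 * p - q)) * (xPlus D K p q ρ) ^ q := by
      rw [hsplit]; ring
    have h3 : K * (xPlus D K p q ρ) ^ q
        < (D * (xPlus D K p q ρ) ^ (2 * p - q)) * (xPlus D K p q ρ) ^ q :=
      mul_lt_mul_of_pos_right hDs hqpos
    rw [h2] at *
    linarith
  have hm : 0 < signMargin D K p q ρ := lt_min hm1 hm2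
  refine ⟨hm, ?_⟩
  intro B hB
  rw [budgetThreshold] at hB
  rw [← hrdef] at hB
  set m := signMargin D K p q ρ with hmdef
  set xm := xMinus D K p q ρ with hxmdef
  set xp := xPlus D K p q ρ with hxpdef
  have hB3 : (xp / ε₀) ^ (1 / r) ≤ B := le_trans (le_max_right _ _) hB
  have hB1 : (4 * Lb * xp ^ (2 * p + δb) / m) ^ (1 / (r * δb)) ≤ B :=
    le_trans (le_trans (le_max_left _ _) (le_max_left _ _)) hB
  have hB2 : (4 * Lv * xp ^ (q + δv) / m) ^ (1 / (r * δv)) ≤ B :=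
    le_trans (le_trans (le_max_right _ _) (le_max_left _ _)) hB
  have hBpos : 0 < B :=
    lt_of_lt_of_le (Real.rpow_pos_of_pos (div_pos hxp0 hε₀) _) hB3
  -- B^r bounds
  have hpow : ∀ A s : ℝ, 0 < A → 0 < s → A ^ (1 / s) ≤ B → A ≤ B ^ s := by
    intro A s hA hs hAB
    calc A = (A ^ (1 / s)) ^ s := by
              rw [one_div, Real.rpow_inv_rpow hA.le (ne_of_gt hs)]
      _ ≤ B ^ s := Real.rpow_le_rpow (Real.rpow_nonneg hA.le _) hAB hs.le
  have hBr : xp / ε₀ ≤ B ^ r := hpow _ _ (div_pos hxp0 hε₀) hrpos hB3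
  have hBrb : 4 * Lb * xp ^ (2 * p + δb) / m ≤ B ^ (r * δb) :=
    hpow _ _ (by positivity) (mul_pos hrpos hδb) hB1
  have hBrv : 4 * Lv * xp ^ (q + δv) / m ≤ B ^ (r * δv) :=
    hpow _ _ (by positivity) (mul_pos hrpos hδv) hB2
  -- endpoint in domain
  have hεp : xp * B ^ (-r) ≤ ε₀ := by
    have hBrpos : 0 < B ^ r := Real.rpow_pos_of_pos hBpos r
    rw [Real.rpow_neg hBpos.le, mul_comm, inv_mul_le_iff₀ hBrpos]
    have := (div_le_iff₀ hε₀).mp hBr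
    linarith
  -- error term bounds
  have hEb : Lb * xp ^ (2 * p + δb) * B ^ (-(r * δb)) ≤ m / 4 := by
    have hBrpos : 0 < B ^ (r * δb) := Real.rpow_pos_of_pos hBpos _
    rw [Real.rpow_neg hBpos.le, mul_comm, ← div_eq_inv_mul, div_le_iff₀ hBrpos]
    have h := (div_le_iff₀ hm).mp hBrb
    have h4 : m / 4 * B ^ (r * δb) = (B ^ (r * δb) * m) / 4 := by ring
    rw [h4]
    linarith
  have hEv : Lv * xp ^ (q + δv) * B ^ (-(r * δv)) ≤ m / 4 := by
    have hBrpos : 0 < B ^ (r * δv) := Real.rpow_pos_of_pos hBpos _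
    rw [Real.rpow_neg hBpos.le, mul_comm, ← div_eq_inv_mul, div_le_iff₀ hBrpos]
    have h := (div_le_iff₀ hm).mp hBrv
    have h4 : m / 4 * B ^ (r * δv) = (B ^ (r * δv) * m) / 4 := by ring
    rw [h4]
    linarith
  -- scaling identity
  have hscale : ∀ x s : ℝ, 0 ≤ x → (x * B ^ (-r)) ^ s = x ^ s * B ^ (-(r * s)) := by
    intro x s hx
    rw [Real.mul_rpow hx (Real.rpow_nonneg hBpos.le _), ← Real.rpow_mul hBpos.le, neg_mul]
  set Bp := B ^ (-(2 * p * r)) with hBpdef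
  have hBppos : 0 < Bp := Real.rpow_pos_of_pos hBpos _
  have hkeyB : B ^ (-(r * q)) = Bp * B := by
    rw [hBpdef, ← Real.rpow_add_one hBpos.ne']
    congr 1
    linear_combination hone
  -- leading-term identity
  have hlead : ∀ x : ℝ, 0 ≤ x →
      D * (x * B ^ (-r)) ^ (2 * p) - K * (x * B ^ (-r)) ^ q / B
        = (D * x ^ (2 * p) - K * x ^ q) * Bp := by
    intro x hx
    rw [hscale x (2 * p) hx, hscale x q hx, hkeyB]
    have e1 : B ^ (-(r * (2 * p))) = Bp := by
      rw [hBpdef]; ring_nf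
    rw [e1]
    field_simp
  -- error identity
  have herr : ∀ x : ℝ, 0 ≤ x →
      Lb * (x * B ^ (-r)) ^ (2 * p + δb) + Lv * (x * B ^ (-r)) ^ (q + δv) / B
        = (Lb * x ^ (2 * p + δb) * B ^ (-(r * δb))
            + Lv * x ^ (q + δv) * B ^ (-(r * δv))) * Bp := by
    intro x hx
    rw [hscale x (2 * p + δb) hx, hscale x (q + δv) hx]
    have e1 : B ^ (-(r * (2 * p + δb))) = B ^ (-(r * δb)) * Bp := by
      rw [hBpdef, ← Real.rpow_add hBpos]; congr 1; ring
    have e2 : B ^ (-(r * (q + δv))) = B ^ (-(r * δv)) * Bp * B := by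
      rw [hBpdef, ← Real.rpow_add hBpos, ← Real.rpow_add_one hBpos.ne']
      congr 1
      linear_combination hone
    rw [e1, e2]
    field_simp
  -- the combined estimate at an endpoint x ∈ {xm, xp}
  have hest : ∀ x : ℝ, 0 < x → x ≤ xp →
      |Δ (x * B ^ (-r)) B - (D * x ^ (2 * p) - K * x ^ q) * Bp| ≤ m / 2 * Bp := by
    intro x hx hxle
    have hε0' : 0 < x * B ^ (-r) := mul_pos hx (Real.rpow_pos_of_pos hBpos _)
    have hεε₀ : x * B ^ (-r) ≤ ε₀ :=
      le_trans (mul_le_mul_of_nonneg_right hxle (Real.rpow_nonneg hBpos.le _)) hεp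
    have hb := hbound _ B hε0' hεε₀ hBpos
    have heq := hlead x hx.le
    have heqe := herr x hx.le
    have hmonob : Lb * x ^ (2 * p + δb) * B ^ (-(r * δb))
        ≤ Lb * xp ^ (2 * p + δb) * B ^ (-(r * δb)) := by
      have h := Real.rpow_le_rpow hx.le hxle (by positivity : (0:ℝ) ≤ 2 * p + δb)
      have hBn : (0:ℝ) ≤ B ^ (-(r * δb)) := Real.rpow_nonneg hBpos.le _
      exact mul_le_mul_of_nonneg_right (mul_le_mul_of_nonneg_left h hLb.le) hBn
    have hmonov : Lv * x ^ (q + δv) * B ^ (-(r * δv))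
        ≤ Lv * xp ^ (q + δv) * B ^ (-(r * δv)) := by
      have h := Real.rpow_le_rpow hx.le hxle (by positivity : (0:ℝ) ≤ q + δv)
      have hBn : (0:ℝ) ≤ B ^ (-(r * δv)) := Real.rpow_nonneg hBpos.le _
      exact mul_le_mul_of_nonneg_right (mul_le_mul_of_nonneg_left h hLv.le) hBn
    have hsum : Lb * x ^ (2 * p + δb) * B ^ (-(r * δb))
        + Lv * x ^ (q + δv) * B ^ (-(r * δv)) ≤ m / 2 := by linarith
    calc |Δ (x * B ^ (-r)) B - (D * x ^ (2 * p) - K * x ^ q) * Bp|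
        = |Δ (x * B ^ (-r)) B - D * (x * B ^ (-r)) ^ (2 * p)
            + K * (x * B ^ (-r)) ^ q / B| := by rw [← heq]; ring_nf
      _ ≤ Lb * (x * B ^ (-r)) ^ (2 * p + δb)
            + Lv * (x * B ^ (-r)) ^ (q + δv) / B := hb
      _ = (Lb * x ^ (2 * p + δb) * B ^ (-(r * δb))
            + Lv * x ^ (q + δv) * B ^ (-(r * δv))) * Bp := heqe
      _ ≤ m / 2 * Bp := mul_le_mul_of_nonneg_right hsum hBppos.le
  -- negative at xm
  have hneg : Δ (xm * B ^ (-r)) B < 0 := by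
    have h1 := (abs_le.mp (hest xm hxm0 hxmxp)).2
    have hmin : D * xm ^ (2 * p) - K * xm ^ q ≤ -m := by
      have := min_le_left (K * xm ^ q - D * xm ^ (2 * p))
        (D * xp ^ (2 * p) - K * xp ^ q)
      rw [hmdef, signMargin, ← hxmdef, ← hxpdef] at *
      linarith [this]
    have h2 : (D * xm ^ (2 * p) - K * xm ^ q) * Bp ≤ (-m) * Bp :=
      mul_le_mul_of_nonneg_right hmin hBppos.le
    have hmB := mul_pos hm hBppos
    have e1 : (-m) * Bp = -(m * Bp) := by ring
    have e2 : m / 2 * Bp = (m * Bp) / 2 := by ring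
    rw [e1] at h2
    linarith
  -- positive at xp
  have hpos : 0 < Δ (xp * B ^ (-r)) B := by
    have h1 := (abs_le.mp (hest xp hxp0 le_rfl)).1
    have hmin : m ≤ D * xp ^ (2 * p) - K * xp ^ q := by
      have := min_le_right (K * xm ^ q - D * xm ^ (2 * p))
        (D * xp ^ (2 * p) - K * xp ^ q)
      rw [hmdef, signMargin, ← hxmdef, ← hxpdef] at *
      linarith [this]
    have h2 : m * Bp ≤ (D * xp ^ (2 * p) - K * xp ^ q) * Bp :=
      mul_le_mul_of_nonneg_right hmin hBppos.le
    have hmB := mul_pos hm hBppos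
    have e2 : m / 2 * Bp = (m * Bp) / 2 := by ring
    linarith
  refine ⟨hneg, hpos, ?_⟩
  -- IVT
  have hεle : xm * B ^ (-r) ≤ xp * B ^ (-r) :=
    mul_le_mul_of_nonneg_right hxmxp (Real.rpow_nonneg hBpos.le _)
  have hsub : Set.Icc (xm * B ^ (-r)) (xp * B ^ (-r)) ⊆ Set.Ioc 0 ε₀ := by
    intro t ht
    exact ⟨lt_of_lt_of_le (mul_pos hxm0 (Real.rpow_pos_of_pos hBpos _)) ht.1,
      le_trans ht.2 hεp⟩
  have hc : ContinuousOn (fun ε => Δ ε B) (Set.Icc (xm * B ^ (-r)) (xp * B ^ (-r))) :=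
    (hcont B hBpos).mono hsub
  have hivt := intermediate_value_Icc hεle hc
  obtain ⟨ε, hmem, heq⟩ := hivt ⟨hneg.le, hpos.le⟩
  exact ⟨ε, hmem, heq⟩
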